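/- arXiv:2203.10081 — 5 statements merged into one kernel-verified Lean document; each statement's English description precedes it below -/
import Mathlib

section
/- On the unit circle S¹, with a(θ) = 1 + β cos(2θ) for fixed β ∈ (-1,1), the coordinate functions x₁ = cos θ and x₂ = sin θ satisfy ∫₀^{2π} a(θ)|x_i'(θ)|² dθ ≤ C ∫₀^{2π} a(θ)|x_i(θ)|² dθ for at least one i ∈ {1,2} with C = 1. More generally: for any positive continuous function a on S^{n-2} with ∫_{S^{n-2}} a(ξ) ξ_i dσ = 0 for all i, there exists i ∈ {1, ..., n-1} such that ∫_{S^{n-2}} a |∇_{S^{n-2}} x_i|² dσ ≤ (n-2) ∫_{S^{n-2}} a x_i² dσ. -/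
open MeasureTheory

/-!
Since `∑ᵢ ξᵢ² = 1` on the sphere, summing the weighted quantities over the `N = n - 1`
coordinates gives `∑ᵢ ∫ a (1 - xᵢ²) = (N - 1) ∫ a = ∑ᵢ (n - 2) ∫ a xᵢ²`. Two sums of `N` terms
that agree cannot have every term of the first strictly larger than the corresponding term
of the second.
-/

theorem EuclideanSpace.sum_sq_eq_one_of_mem_sphere {ι : Type*} [Fintype ι]
    {ξ : EuclideanSpace ℝ ι} (hξ : ξ ∈ Metric.sphere 0 1) : ∑ i, ξ i ^ 2 = 1 := by
  rw [← EuclideanSpace.real_norm_sq_eq, mem_sphere_zero_iff_norm.mp hξ, one_pow]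

section PartitionOfUnity

variable {X ι : Type*} [MeasurableSpace X] {μ : Measure X} [Fintype ι]
  {w : X → ℝ} {f : ι → X → ℝ}

theorem sum_integral_mul_eq_integral_of_sum_eq_one
    (hwf : ∀ i, Integrable (fun x => w x * f i x) μ) (hf : ∀ x, ∑ i, f i x = 1) :
    ∑ i, ∫ x, w x * f i x ∂μ = ∫ x, w x ∂μ := by
  rw [← integral_finsetSum _ fun i _ => hwf i]
  simp only [← Finset.mul_sum, hf, mul_one]

theorem exists_integral_mul_one_sub_le_of_sum_eq_one [Nonempty ι]
    (hwf : ∀ i, Integrable (fun x => w x * f i x) μ) (hf : ∀ x, ∑ i, f i x = 1) :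
    ∃ i, ∫ x, w x * (1 - f i x) ∂μ ≤ ((Fintype.card ι : ℝ) - 1) * ∫ x, w x * f i x ∂μ := by
  have hw : Integrable w μ := by
    simpa only [← Finset.mul_sum, hf, mul_one] using integrable_finsetSum Finset.univ
      fun i _ => hwf i
  have hsum_eq : ∑ i, ∫ x, w x * (1 - f i x) ∂μ
      = ∑ i, ((Fintype.card ι : ℝ) - 1) * ∫ x, w x * f i x ∂μ := by
    simp only [mul_one_sub, integral_sub hw (hwf _), Finset.sum_sub_distrib, ← Finset.mul_sum,
      sum_integral_mul_eq_integral_of_sum_eq_one hwf hf, Finset.sum_const, Finset.card_univ,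
      nsmul_eq_mul]
    ring
  obtain ⟨i, -, hi⟩ := Finset.exists_le_of_sum_le Finset.univ_nonempty hsum_eq.le
  exact ⟨i, hi⟩

end PartitionOfUnity

theorem stmt3_general (n : ℕ) (hn : 3 ≤ n)
    (a : EuclideanSpace ℝ (Fin (n - 1)) → ℝ) (ha : Continuous a) :
    ∃ i : Fin (n - 1),
      (∫ ξ : Metric.sphere (0 : EuclideanSpace ℝ (Fin (n - 1))) 1,
        a ξ * (1 - ((ξ : EuclideanSpace ℝ (Fin (n - 1))) i) ^ 2)
        ∂((volume : Measure (EuclideanSpace ℝ (Fin (n - 1)))).toSphere))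
      ≤ ((n : ℝ) - 2) *
        ∫ ξ : Metric.sphere (0 : EuclideanSpace ℝ (Fin (n - 1))) 1,
          a ξ * ((ξ : EuclideanSpace ℝ (Fin (n - 1))) i) ^ 2
          ∂((volume : Measure (EuclideanSpace ℝ (Fin (n - 1)))).toSphere) := by
  have : Nonempty (Fin (n - 1)) := ⟨⟨0, by omega⟩⟩
  have hcard : ((Fintype.card (Fin (n - 1)) : ℕ) : ℝ) - 1 = (n : ℝ) - 2 := by
    rw [Fintype.card_fin, Nat.cast_sub (by omega)]
    ring
  rw [← hcard]
  refine exists_integral_mul_one_sub_le_of_sum_eq_one (fun i => ?_)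
    fun ξ => EuclideanSpace.sum_sq_eq_one_of_mem_sphere ξ.2
  exact Continuous.integrable_of_hasCompactSupport (by fun_prop) (.of_compactSpace _)

/-- For a positive continuous weight `a` on the unit sphere `S^{n-2} ⊂ ℝ^{n-1}` whose
weighted coordinate averages vanish, there exists a coordinate function `x_i` with
`∫ a |∇_{S^{n-2}} x_i|² ≤ (n-2) ∫ a x_i²`.  Here we use the identity
`|∇_{S^{n-2}} x_i|²(ξ) = 1 - ξ_i²` for the tangential gradient of the coordinate
function on the unit sphere, and `volume.toSphere` is the surface measure. -/
theorem stmt3 (n : ℕ) (hn : 3 ≤ n)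
    (a : EuclideanSpace ℝ (Fin (n - 1)) → ℝ) (ha : Continuous a) (hpos : ∀ ξ, 0 < a ξ)
    (horth : ∀ i : Fin (n - 1),
      (∫ ξ : Metric.sphere (0 : EuclideanSpace ℝ (Fin (n - 1))) 1,
        a ξ * (ξ : EuclideanSpace ℝ (Fin (n - 1))) i
        ∂((volume : Measure (EuclideanSpace ℝ (Fin (n - 1)))).toSphere)) = 0) :
    ∃ i : Fin (n - 1),
      (∫ ξ : Metric.sphere (0 : EuclideanSpace ℝ (Fin (n - 1))) 1,
        a ξ * (1 - ((ξ : EuclideanSpace ℝ (Fin (n - 1))) i) ^ 2)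
        ∂((volume : Measure (EuclideanSpace ℝ (Fin (n - 1)))).toSphere))
      ≤ ((n : ℝ) - 2) *
        ∫ ξ : Metric.sphere (0 : EuclideanSpace ℝ (Fin (n - 1))) 1,
          a ξ * ((ξ : EuclideanSpace ℝ (Fin (n - 1))) i) ^ 2
          ∂((volume : Measure (EuclideanSpace ℝ (Fin (n - 1)))).toSphere) :=
  stmt3_general n hn a ha
end

section
/- Let β ∈ (-1, 1] and let μ₁(β) be the first eigenvalue of the Dirichlet problem [(1 + β cos(2θ)) u'(θ)]' = -μ (1 + β cos(2θ)) u(θ) on (0, π) with u(0) = u(π) = 0, characterized by the Rayleigh quotient μ₁(β) = inf_{0 ≠ u ∈ H¹₀((0,π))} ∫₀^π (1 + β cos 2θ)|u'|² dθ / ∫₀^π (1 + β cos 2θ)|u|² dθ. Then μ₁(β) ≤ (2 + β)/(2 - β). -/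
/-!
Testing the Rayleigh quotient with `u = sin` gives the bound: since `cos 2θ = 1 - 2 sin² θ`,
both weighted integrals reduce to `∫₀^π sin² = π/2` and `∫₀^π sin⁴ = 3π/8`, giving
`∫ w cos² = π(2 + β)/4` and `∫ w sin² = π(2 - β)/4`. For `|β| ≤ 1` the weight is nonnegative,
so all Rayleigh quotients are nonnegative and the infimum is bounded by any one of them.
-/

open Real

def dirichletRayleighQuotients (w : ℝ → ℝ) : Set ℝ :=
  {q : ℝ | ∃ u : ℝ → ℝ, ContDiff ℝ 1 u ∧ u 0 = 0 ∧ u π = 0 ∧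
    (∫ θ in (0 : ℝ)..π, w θ * u θ ^ 2) ≠ 0 ∧
    q = (∫ θ in (0 : ℝ)..π, w θ * deriv u θ ^ 2) / (∫ θ in (0 : ℝ)..π, w θ * u θ ^ 2)}

theorem bddBelow_dirichletRayleighQuotients {w : ℝ → ℝ} (hw : ∀ θ ∈ Set.Icc 0 π, 0 ≤ w θ) :
    BddBelow (dirichletRayleighQuotients w) := by
  refine ⟨0, ?_⟩
  rintro q ⟨u, -, -, -, -, rfl⟩
  have integral_nonneg (f : ℝ → ℝ) : 0 ≤ ∫ θ in (0 : ℝ)..π, w θ * f θ ^ 2 :=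
    intervalIntegral.integral_nonneg pi_pos.le fun θ hθ => mul_nonneg (hw θ hθ) (sq_nonneg _)
  exact div_nonneg (integral_nonneg _) (integral_nonneg _)

theorem sin_mem_dirichletRayleighQuotients {w : ℝ → ℝ}
    (hw : (∫ θ in (0 : ℝ)..π, w θ * sin θ ^ 2) ≠ 0) :
    (∫ θ in (0 : ℝ)..π, w θ * cos θ ^ 2) / (∫ θ in (0 : ℝ)..π, w θ * sin θ ^ 2) ∈
      dirichletRayleighQuotients w :=
  ⟨sin, contDiff_sin, sin_zero, sin_pi, hw, by rw [Real.deriv_sin]⟩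

theorem integral_sin_sq_zero_pi : ∫ x in (0 : ℝ)..π, sin x ^ 2 = π / 2 := by
  simp

theorem integral_sin_pow_four_zero_pi : ∫ x in (0 : ℝ)..π, sin x ^ 4 = 3 * π / 8 := by
  have h := integral_sin_pow_even (n := 2)
  norm_num [Finset.prod_range_succ] at h
  linarith

theorem integral_one_add_mul_cos_two_mul_mul_sin_sq (β : ℝ) :
    ∫ θ in (0 : ℝ)..π, (1 + β * cos (2 * θ)) * sin θ ^ 2 = π * (2 - β) / 4 := by
  have h (θ : ℝ) : (1 + β * cos (2 * θ)) * sin θ ^ 2 = (1 + β) * sin θ ^ 2 - 2 * β * sin θ ^ 4 := by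
    rw [cos_two_mul_eq_one_sub]; ring
  simp_rw [h]
  rw [intervalIntegral.integral_sub, intervalIntegral.integral_const_mul,
    intervalIntegral.integral_const_mul, integral_sin_sq_zero_pi, integral_sin_pow_four_zero_pi]
  · ring
  all_goals exact (by fun_prop : Continuous _).intervalIntegrable _ _

theorem integral_one_add_mul_cos_two_mul_mul_cos_sq (β : ℝ) :
    ∫ θ in (0 : ℝ)..π, (1 + β * cos (2 * θ)) * cos θ ^ 2 = π * (2 + β) / 4 := by
  have h (θ : ℝ) : (1 + β * cos (2 * θ)) * cos θ ^ 2 =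
      (1 + β) - (1 + 3 * β) * sin θ ^ 2 + 2 * β * sin θ ^ 4 := by
    rw [cos_two_mul_eq_one_sub, cos_sq']; ring
  simp_rw [h]
  rw [intervalIntegral.integral_add, intervalIntegral.integral_sub, intervalIntegral.integral_const,
    intervalIntegral.integral_const_mul, intervalIntegral.integral_const_mul,
    integral_sin_sq_zero_pi, integral_sin_pow_four_zero_pi, smul_eq_mul]
  · ring
  all_goals exact (by fun_prop : Continuous _).intervalIntegrable _ _

theorem one_add_mul_cos_nonneg {β : ℝ} (hβ : |β| ≤ 1) (x : ℝ) : 0 ≤ 1 + β * cos x := by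
  have h : |β * cos x| ≤ 1 := by
    rw [abs_mul]
    exact mul_le_one₀ hβ (abs_nonneg _) (abs_cos_le_one x)
  linarith [neg_abs_le (β * cos x)]

/-- The first Dirichlet eigenvalue `μ₁(β)` of `[(1+β cos 2θ)u']' = -μ(1+β cos 2θ)u` on `(0,π)`,
given by the Rayleigh quotient over nonzero functions vanishing at the endpoints, satisfies
`μ₁(β) ≤ (2+β)/(2-β)` for β ∈ (-1, 1]. -/
theorem stmt6 (β : ℝ) (hβ : β ∈ Set.Ioc (-1 : ℝ) 1) :
    sInf {q : ℝ | ∃ u : ℝ → ℝ, ContDiff ℝ 1 u ∧ u 0 = 0 ∧ u Real.pi = 0 ∧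
      (∫ θ in (0 : ℝ)..Real.pi, (1 + β * Real.cos (2 * θ)) * u θ ^ 2) ≠ 0 ∧
      q = (∫ θ in (0 : ℝ)..Real.pi, (1 + β * Real.cos (2 * θ)) * deriv u θ ^ 2) /
          (∫ θ in (0 : ℝ)..Real.pi, (1 + β * Real.cos (2 * θ)) * u θ ^ 2)}
      ≤ (2 + β) / (2 - β) := by
  obtain ⟨hβ_lower, hβ_upper⟩ := hβ
  have hβ_abs : |β| ≤ 1 := abs_le.mpr ⟨hβ_lower.le, hβ_upper⟩
  have h_sin_integral_pos : 0 < π * (2 - β) / 4 := by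
    have : 0 < 2 - β := by linarith
    positivity
  have h_mem := sin_mem_dirichletRayleighQuotients (w := fun θ => 1 + β * cos (2 * θ))
    (by rw [integral_one_add_mul_cos_two_mul_mul_sin_sq]; exact h_sin_integral_pos.ne')
  rw [integral_one_add_mul_cos_two_mul_mul_cos_sq, integral_one_add_mul_cos_two_mul_mul_sin_sq]
    at h_mem
  calc sInf (dirichletRayleighQuotients fun θ => 1 + β * cos (2 * θ))
      ≤ π * (2 + β) / 4 / (π * (2 - β) / 4) :=
        csInf_le (bddBelow_dirichletRayleighQuotients fun θ _ => one_add_mul_cos_nonneg hβ_abs _)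
          h_mem
    _ = (2 + β) / (2 - β) := by field_simp
end

section
/- Let β ∈ (-1, -1/2) and set ε = 1 + β. Define u: [0, π] → ℝ by u(θ) = ε^{-1/2} θ for θ ∈ [0, √ε], u(θ) = 1 for θ ∈ (√ε, π - √ε), u(θ) = ε^{-1/2}(π - θ) for θ ∈ [π - √ε, π]. Then there is an absolute constant C such that ∫₀^π (1 + β cos 2θ)|u'(θ)|² dθ ≤ C √ε while ∫₀^π (1 + β cos 2θ)|u(θ)|² dθ ≥ 1/C; consequently the Rayleigh quotient of u is at most C² √(1+β). -/
/-!
Write `ε = 1 + β` and `s = √ε`. The weight `1 + β cos 2θ = ε - 2β sin²θ` with `-2β ∈ [1, 2]`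
lies between `sin²θ` and `ε + 2 sin²θ`. On the two ramps `[0, s]` and `[π - s, π]` we have
`sin²θ ≤ s² = ε`, so the weight is at most `3ε` there, while `u' = ±1/s`; hence the energy is at
most `2 · s · 3ε / ε = 6s`. On the plateau `[s, π - s]` we have `u = 1` and the weight is at
least `sin²θ`, whose integral over `[s, π - s]` is at least `(π - 2s)/2 ≥ (π - 2)/2`.
-/

open Real Set intervalIntegral MeasureTheory

theorem intervalIntegral.integral_eq_add_add_of_eqOn_Ioo {f f₁ f₂ f₃ : ℝ → ℝ} {a b c d : ℝ}
    (hab : a ≤ b) (hbc : b ≤ c) (hcd : c ≤ d)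
    (h₁ : EqOn f f₁ (Ioo a b)) (h₂ : EqOn f f₂ (Ioo b c)) (h₃ : EqOn f f₃ (Ioo c d))
    (hf₁ : IntervalIntegrable f₁ volume a b) (hf₂ : IntervalIntegrable f₂ volume b c)
    (hf₃ : IntervalIntegrable f₃ volume c d) :
    ∫ x in a..d, f x = (∫ x in a..b, f₁ x) + (∫ x in b..c, f₂ x) + ∫ x in c..d, f₃ x := by
  have i₁ : IntervalIntegrable f volume a b :=
    (intervalIntegrable_congr_uIoo (by rwa [uIoo_of_le hab])).mpr hf₁
  have i₂ : IntervalIntegrable f volume b c :=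
    (intervalIntegrable_congr_uIoo (by rwa [uIoo_of_le hbc])).mpr hf₂
  have i₃ : IntervalIntegrable f volume c d :=
    (intervalIntegrable_congr_uIoo (by rwa [uIoo_of_le hcd])).mpr hf₃
  rw [← integral_add_adjacent_intervals (i₁.trans i₂) i₃, ← integral_add_adjacent_intervals i₁ i₂,
    integral_congr_Ioo_of_le hab h₁, integral_congr_Ioo_of_le hbc h₂,
    integral_congr_Ioo_of_le hcd h₃]

theorem div_le_sq_mul_of_le_mul_of_inv_le {C x N D : ℝ} (hC : 0 < C) (hx : 0 ≤ x)
    (hN : N ≤ C * x) (hD : 1 / C ≤ D) : N / D ≤ C ^ 2 * x := by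
  have hD₀ : 0 < D := (one_div_pos.mpr hC).trans_le hD
  calc N / D ≤ C * x / D := div_le_div_of_nonneg_right hN hD₀.le
    _ ≤ C * x / (1 / C) := div_le_div_of_nonneg_left (by positivity) (by positivity) hD
    _ = C ^ 2 * x := by field_simp

section RampCutoff

noncomputable def rampCutoff (s θ : ℝ) : ℝ :=
  if θ ≤ s then θ / s else if θ < π - s then 1 else (π - θ) / s

/-- The derivative of `rampCutoff s` away from the kinks. -/
noncomputable def rampCutoffDeriv (s θ : ℝ) : ℝ :=
  if θ ≤ s then 1 / s else if θ < π - s then 0 else -(1 / s)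

variable {s θ : ℝ}

theorem rampCutoff_of_le (h : θ ≤ s) : rampCutoff s θ = θ / s := if_pos h

theorem rampCutoff_of_mem_Ioo (h : θ ∈ Ioo s (π - s)) : rampCutoff s θ = 1 := by
  rw [rampCutoff, if_neg h.1.not_ge, if_pos h.2]

theorem rampCutoff_of_pi_sub_lt (hs : s ≤ π - s) (h : π - s < θ) :
    rampCutoff s θ = (π - θ) / s := by
  rw [rampCutoff, if_neg (by linarith), if_neg h.not_gt]

theorem rampCutoffDeriv_of_le (h : θ ≤ s) : rampCutoffDeriv s θ = 1 / s := if_pos h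

theorem rampCutoffDeriv_of_mem_Ioo (h : θ ∈ Ioo s (π - s)) : rampCutoffDeriv s θ = 0 := by
  rw [rampCutoffDeriv, if_neg h.1.not_ge, if_pos h.2]

theorem rampCutoffDeriv_of_pi_sub_lt (hs : s ≤ π - s) (h : π - s < θ) :
    rampCutoffDeriv s θ = -(1 / s) := by
  rw [rampCutoffDeriv, if_neg (by linarith), if_neg h.not_gt]

variable {w : ℝ → ℝ}

theorem integral_mul_rampCutoffDeriv_sq (hs : 0 ≤ s) (hsπ : s ≤ π - s) (hw : Continuous w) :
    ∫ θ in 0..π, w θ * rampCutoffDeriv s θ ^ 2 =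
      ((∫ θ in 0..s, w θ) + ∫ θ in π - s..π, w θ) / s ^ 2 := by
  have hc : Continuous fun θ => w θ * (1 / s) ^ 2 := by fun_prop
  rw [integral_eq_add_add_of_eqOn_Ioo hs hsπ (by linarith)
      (f₁ := fun θ => w θ * (1 / s) ^ 2) (f₂ := 0) (f₃ := fun θ => w θ * (1 / s) ^ 2)
      (fun θ hθ => by simp only [rampCutoffDeriv_of_le hθ.2.le])
      (fun θ hθ => by simp [rampCutoffDeriv_of_mem_Ioo hθ])
      (fun θ hθ => by simp only [rampCutoffDeriv_of_pi_sub_lt hsπ hθ.1, neg_sq])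
      (hc.intervalIntegrable _ _) intervalIntegrable_const (hc.intervalIntegrable _ _),
    intervalIntegral.integral_mul_const, intervalIntegral.integral_mul_const]
  simp only [Pi.zero_apply, intervalIntegral.integral_zero]
  ring

theorem integral_le_integral_mul_rampCutoff_sq (hs : 0 ≤ s) (hsπ : s ≤ π - s)
    (hw : Continuous w) (hw₀ : ∀ θ ∈ Icc 0 π, 0 ≤ w θ) :
    ∫ θ in s..π - s, w θ ≤ ∫ θ in 0..π, w θ * rampCutoff s θ ^ 2 := by
  rw [integral_eq_add_add_of_eqOn_Ioo hs hsπ (by linarith)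
      (f₁ := fun θ => w θ * (θ / s) ^ 2) (f₂ := w) (f₃ := fun θ => w θ * ((π - θ) / s) ^ 2)
      (fun θ hθ => by simp only [rampCutoff_of_le hθ.2.le])
      (fun θ hθ => by simp [rampCutoff_of_mem_Ioo hθ])
      (fun θ hθ => by simp only [rampCutoff_of_pi_sub_lt hsπ hθ.1])
      ((by fun_prop : Continuous _).intervalIntegrable _ _) (hw.intervalIntegrable _ _)
      ((by fun_prop : Continuous _).intervalIntegrable _ _)]
  have h₁ : 0 ≤ ∫ θ in 0..s, w θ * (θ / s) ^ 2 :=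
    integral_nonneg hs fun θ hθ => mul_nonneg (hw₀ θ ⟨hθ.1, by linarith [hθ.2]⟩) (sq_nonneg _)
  have h₃ : 0 ≤ ∫ θ in π - s..π, w θ * ((π - θ) / s) ^ 2 :=
    integral_nonneg (by linarith) fun θ hθ =>
      mul_nonneg (hw₀ θ ⟨by linarith [hθ.1], hθ.2⟩) (sq_nonneg _)
  linarith

end RampCutoff

section Weight

variable {β θ : ℝ}

theorem one_add_mul_cos_two_mul_eq (β θ : ℝ) :
    1 + β * cos (2 * θ) = (1 + β) - 2 * β * sin θ ^ 2 := by
  rw [cos_two_mul']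
  linear_combination β * sin_sq_add_cos_sq θ

theorem sin_sq_le_one_add_mul_cos_two_mul (h₁ : -1 ≤ β) (h₂ : β ≤ -1 / 2) :
    sin θ ^ 2 ≤ 1 + β * cos (2 * θ) := by
  rw [one_add_mul_cos_two_mul_eq]
  nlinarith [sq_nonneg (sin θ)]

theorem one_add_mul_cos_two_mul_le (h₁ : -1 ≤ β) (hθ : sin θ ^ 2 ≤ 1 + β) :
    1 + β * cos (2 * θ) ≤ 3 * (1 + β) := by
  rw [one_add_mul_cos_two_mul_eq]
  nlinarith [sq_nonneg (sin θ)]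

theorem integral_one_add_mul_cos_two_mul_le {a b : ℝ} (h₁ : -1 ≤ β) (hab : a ≤ b)
    (h : ∀ θ ∈ Icc a b, sin θ ^ 2 ≤ 1 + β) :
    ∫ θ in a..b, 1 + β * cos (2 * θ) ≤ 3 * (1 + β) * (b - a) := by
  calc ∫ θ in a..b, 1 + β * cos (2 * θ) ≤ ∫ _ in a..b, 3 * (1 + β) :=
        integral_mono_on hab ((by fun_prop : Continuous _).intervalIntegrable _ _)
          intervalIntegrable_const
          fun θ hθ => one_add_mul_cos_two_mul_le h₁ (h θ hθ)
    _ = 3 * (1 + β) * (b - a) := by rw [intervalIntegral.integral_const, smul_eq_mul, mul_comm]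

end Weight

theorem pi_sub_two_mul_div_two_le_integral_sin_sq {s : ℝ} (hs : 0 ≤ s) (hsπ : s ≤ π / 2) :
    (π - 2 * s) / 2 ≤ ∫ θ in s..π - s, sin θ ^ 2 := by
  have : 0 ≤ sin s * cos s :=
    mul_nonneg (sin_nonneg_of_nonneg_of_le_pi hs (by linarith [pi_pos]))
      (cos_nonneg_of_mem_Icc ⟨by linarith [pi_pos], hsπ⟩)
  rw [integral_sin_sq, sin_pi_sub, cos_pi_sub]
  linarith

section RayleighQuotient

variable {β : ℝ}

theorem sqrt_one_add_le_pi_sub (h₂ : β ≤ 0) : √(1 + β) ≤ π - √(1 + β) := by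
  have : √(1 + β) ≤ 1 := sqrt_le_one.mpr (by linarith)
  linarith [pi_gt_three]

theorem integral_mul_rampCutoffDeriv_sq_le (h₁ : -1 ≤ β) (h₂ : β ≤ 0) :
    ∫ θ in 0..π, (1 + β * cos (2 * θ)) * rampCutoffDeriv √(1 + β) θ ^ 2 ≤ 6 * √(1 + β) := by
  set s := √(1 + β)
  have hs : 0 ≤ s := sqrt_nonneg _
  have hs2 : s ^ 2 = 1 + β := sq_sqrt (by linarith)
  have hsπ := sqrt_one_add_le_pi_sub h₂
  have hleft : ∫ θ in 0..s, 1 + β * cos (2 * θ) ≤ 3 * (1 + β) * (s - 0) :=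
    integral_one_add_mul_cos_two_mul_le h₁ hs fun θ hθ =>
      hs2 ▸ sin_sq_le_sq.trans (pow_le_pow_left₀ hθ.1 hθ.2 2)
  have hright : ∫ θ in π - s..π, 1 + β * cos (2 * θ) ≤ 3 * (1 + β) * (π - (π - s)) :=
    integral_one_add_mul_cos_two_mul_le h₁ (by linarith) fun θ hθ => by
      rw [← hs2, ← sin_pi_sub]
      exact sin_sq_le_sq.trans (pow_le_pow_left₀ (by linarith [hθ.2]) (by linarith [hθ.1]) 2)
  rw [integral_mul_rampCutoffDeriv_sq hs hsπ (by fun_prop)]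
  refine div_le_of_le_mul₀ (sq_nonneg s) (by positivity) ?_
  rw [hs2]
  linarith

theorem one_div_six_le_integral_mul_rampCutoff_sq (h₁ : -1 ≤ β) (h₂ : β ≤ -1 / 2) :
    1 / 6 ≤ ∫ θ in 0..π, (1 + β * cos (2 * θ)) * rampCutoff √(1 + β) θ ^ 2 := by
  set s := √(1 + β)
  have hs : 0 ≤ s := sqrt_nonneg _
  have hs1 : s ≤ 1 := sqrt_le_one.mpr (by linarith)
  have hsπ := sqrt_one_add_le_pi_sub (β := β) (by linarith)
  have hsin : ∫ θ in s..π - s, sin θ ^ 2 ≤ ∫ θ in s..π - s, 1 + β * cos (2 * θ) :=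
    integral_mono_on hsπ ((by fun_prop : Continuous _).intervalIntegrable _ _)
      ((by fun_prop : Continuous _).intervalIntegrable _ _)
      fun θ _ => sin_sq_le_one_add_mul_cos_two_mul h₁ h₂
  have hplateau : ∫ θ in s..π - s, 1 + β * cos (2 * θ) ≤
      ∫ θ in 0..π, (1 + β * cos (2 * θ)) * rampCutoff s θ ^ 2 :=
    integral_le_integral_mul_rampCutoff_sq hs hsπ (by fun_prop) fun θ _ => (sq_nonneg _).trans (sin_sq_le_one_add_mul_cos_two_mul (θ := θ) h₁ h₂)
  linarith [pi_sub_two_mul_div_two_le_integral_sin_sq hs (by linarith [pi_gt_three]), pi_gt_three]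

end RayleighQuotient

/-- For β ∈ (-1,-1/2), ε = 1+β, the piecewise linear cutoff `u` (with piecewise derivative `g`)
satisfies `∫₀^π (1+β cos 2θ) g² ≤ C√ε` and `∫₀^π (1+β cos 2θ) u² ≥ 1/C` for an absolute
constant C, whence its Rayleigh quotient is at most `C²√(1+β)`. -/
theorem stmt9 :
    ∃ C > 0, ∀ β ∈ Set.Ioo (-1 : ℝ) (-1/2 : ℝ),
      let ε : ℝ := 1 + β
      let u : ℝ → ℝ := fun θ =>
        if θ ≤ Real.sqrt ε then θ / Real.sqrt ε
        else if θ < Real.pi - Real.sqrt ε then 1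
        else (Real.pi - θ) / Real.sqrt ε
      let g : ℝ → ℝ := fun θ =>
        if θ ≤ Real.sqrt ε then 1 / Real.sqrt ε
        else if θ < Real.pi - Real.sqrt ε then 0
        else -(1 / Real.sqrt ε)
      (∫ θ in (0 : ℝ)..Real.pi, (1 + β * Real.cos (2 * θ)) * g θ ^ 2) ≤ C * Real.sqrt ε ∧
      1 / C ≤ (∫ θ in (0 : ℝ)..Real.pi, (1 + β * Real.cos (2 * θ)) * u θ ^ 2) ∧
      (∫ θ in (0 : ℝ)..Real.pi, (1 + β * Real.cos (2 * θ)) * g θ ^ 2) /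
        (∫ θ in (0 : ℝ)..Real.pi, (1 + β * Real.cos (2 * θ)) * u θ ^ 2)
        ≤ C ^ 2 * Real.sqrt (1 + β) := by
  refine ⟨6, by norm_num, fun β ⟨h₁, h₂⟩ => ?_⟩
  have hN := integral_mul_rampCutoffDeriv_sq_le h₁.le (by linarith)
  have hD := one_div_six_le_integral_mul_rampCutoff_sq h₁.le h₂.le
  exact ⟨hN, hD, div_le_sq_mul_of_le_mul_of_inv_le (by norm_num) (sqrt_nonneg _) hN hD⟩
end

section
/- For β ∈ (-1, 0) and u ∈ H¹₀((0,π)) with max_{[0,π]} |u| = 1 attained at θ₀ ∈ (0, π/2], we have 1 ≤ (∫₀^{θ₀} (1 + β cos 2θ)|u'|² dθ) · (∫₀^{θ₀} (1 + β cos 2θ)^{-1} dθ), and ∫₀^{θ₀} (1 + β cos 2θ)^{-1} dθ ≤ C (1+β)^{-1/2} for an absolute constant C. Consequently ∫₀^{θ₀} (1 + β cos 2θ)|u'|² dθ ≥ C^{-1} (1+β)^{1/2}. -/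
/-! Since `u 0 = 0`, `1 = u(θ₀)² = (∫₀^{θ₀} u')²`, and Cauchy–Schwarz against the weights `w` and
`w⁻¹`, `w θ = 1 + β cos 2θ`, gives the first inequality. From `w θ = (1 + β) - 2β sin²θ` and
`sin θ ≥ 2θ/π` one gets `w θ ≥ ((1 + β) + (2θ/π)²) / 2` on `[0, π/2]`, and the reciprocal of the
right-hand side integrates (to an arctangent) to at most `π² / (2 √(1 + β))`. -/

open MeasureTheory Real

theorem sq_integral_le_integral_mul_sq_mul_integral_inv {α : Type*} [MeasurableSpace α]
    {μ : Measure α} {w f : α → ℝ} (hw : ∀ᵐ x ∂μ, 0 < w x) (hf : Integrable f μ)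
    (hwf : Integrable (fun x => w x * f x ^ 2) μ) (hw_inv : Integrable (fun x => (w x)⁻¹) μ) :
    (∫ x, f x ∂μ) ^ 2 ≤ (∫ x, w x * f x ^ 2 ∂μ) * ∫ x, (w x)⁻¹ ∂μ := by
  -- `w⁻¹ t² - 2 t f + w f² = w⁻¹ (t - w f)² ≥ 0`: a nonnegative quadratic in `t`
  have hquad : ∀ t : ℝ, 0 ≤ (∫ x, (w x)⁻¹ ∂μ) * (t * t) + (-2 * ∫ x, f x ∂μ) * t
      + ∫ x, w x * f x ^ 2 ∂μ := by
    intro t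
    have hpt : ∀ᵐ x ∂μ, 0 ≤ (w x)⁻¹ * (t * t) + (-2 * t) * f x + w x * f x ^ 2 := by
      filter_upwards [hw] with x hx
      have : (w x)⁻¹ * (t * t) + (-2 * t) * f x + w x * f x ^ 2
          = (w x)⁻¹ * (t - w x * f x) ^ 2 := by
        field_simp; ring
      rw [this]; positivity
    have hint : Integrable (fun x => (w x)⁻¹ * (t * t) + (-2 * t) * f x) μ :=
      (hw_inv.mul_const _).add (hf.const_mul _)
    have := integral_nonneg_of_ae hpt
    rw [integral_add hint hwf, integral_add (hw_inv.mul_const _) (hf.const_mul _),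
      integral_mul_const, integral_const_mul] at this
    linarith
  have := discrim_le_zero hquad
  rw [discrim] at this
  nlinarith [this]

theorem sq_intervalIntegral_le_integral_mul_sq_mul_integral_inv {w f : ℝ → ℝ}
    (hw : Continuous w) (hw_pos : ∀ x, 0 < w x) (hf : Continuous f) (a b : ℝ) :
    (∫ x in a..b, f x) ^ 2 ≤ (∫ x in a..b, w x * f x ^ 2) * ∫ x in a..b, (w x)⁻¹ := by
  wlog hab : a ≤ b generalizing a b
  · simpa only [intervalIntegral.integral_symm a b, neg_sq, neg_mul_neg] using
      this b a (le_of_not_ge hab)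
  have hw_inv : Continuous fun x => (w x)⁻¹ := hw.inv₀ fun x => (hw_pos x).ne'
  simp only [intervalIntegral.integral_of_le hab]
  exact sq_integral_le_integral_mul_sq_mul_integral_inv (Filter.Eventually.of_forall hw_pos)
    hf.integrableOn_Ioc (hw.mul (hf.pow 2)).integrableOn_Ioc hw_inv.integrableOn_Ioc

theorem integral_inv_add_sq_le {a : ℝ} (ha : 0 < a) (x : ℝ) :
    ∫ t in (0 : ℝ)..x, (a + t ^ 2)⁻¹ ≤ π / (2 * √a) := by
  have hsa : 0 < √a := sqrt_pos.2 ha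
  have hderiv : ∀ t, HasDerivAt (fun t => arctan (t / √a) / √a) (a + t ^ 2)⁻¹ t := by
    intro t
    refine (((hasDerivAt_id t).div_const √a).arctan.div_const √a).congr_deriv ?_
    field_simp
    rw [id, sq_sqrt ha.le]
  have hcont : Continuous fun t : ℝ => (a + t ^ 2)⁻¹ :=
    (by fun_prop : Continuous fun t : ℝ => a + t ^ 2).inv₀ fun t => by positivity
  rw [intervalIntegral.integral_eq_sub_of_hasDerivAt (fun t _ => hderiv t)
    (hcont.intervalIntegrable _ _)]
  simp only [zero_div, arctan_zero, sub_zero]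
  rw [← div_div, div_le_div_iff_of_pos_right hsa]
  exact (arctan_lt_pi_div_two _).le

theorem one_add_mul_cos_pos {β : ℝ} (hβ : |β| < 1) (x : ℝ) : 0 < 1 + β * cos x := by
  have := neg_abs_le (β * cos x)
  rw [abs_mul] at this
  nlinarith [abs_cos_le_one x, abs_nonneg β]

theorem half_add_sq_le_one_add_mul_cos_two_mul {β θ : ℝ} (hβ : β ∈ Set.Icc (-1) 0)
    (hθ : θ ∈ Set.Icc 0 (π / 2)) :
    (1 + β + (2 / π * θ) ^ 2) / 2 ≤ 1 + β * cos (2 * θ) := by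
  obtain ⟨hβ1, hβ0⟩ := hβ
  have hs0 : 0 ≤ 2 / π * θ := by have := hθ.1; positivity
  have hs1 : 2 / π * θ ≤ 1 := by
    rw [div_mul_eq_mul_div, div_le_one pi_pos]
    linarith [hθ.2]
  have hsq : (2 / π * θ) ^ 2 ≤ sin θ ^ 2 := pow_le_pow_left₀ hs0 (mul_le_sin hθ.1 hθ.2) 2
  generalize 2 / π * θ = s at hs0 hs1 hsq ⊢
  rw [cos_two_mul, cos_sq']
  -- `(1 + β) - 2β s² - (1 + β + s²)/2 = (1 + β)(1 - s²)/2 - (3/2)β s²`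
  linarith [mul_nonneg (by linarith : 0 ≤ 1 + β) (by nlinarith : 0 ≤ 1 - s ^ 2),
    mul_nonneg (by linarith : 0 ≤ -β) (sq_nonneg s),
    mul_le_mul_of_nonneg_left hsq (by linarith : 0 ≤ -β)]

theorem integral_inv_one_add_mul_cos_two_mul_le {β θ₀ : ℝ} (hβ : β ∈ Set.Ioc (-1) 0)
    (hθ₀ : θ₀ ∈ Set.Icc 0 (π / 2)) :
    ∫ θ in (0 : ℝ)..θ₀, (1 + β * cos (2 * θ))⁻¹ ≤ π ^ 2 / 2 * (√(1 + β))⁻¹ := by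
  obtain ⟨hβ1, hβ0⟩ := hβ
  have ha : 0 < 1 + β := by linarith
  have hπ := pi_pos
  have hw_inv : Continuous fun θ => (1 + β * cos (2 * θ))⁻¹ :=
    (by fun_prop : Continuous fun θ => 1 + β * cos (2 * θ)).inv₀
      fun θ => (one_add_mul_cos_pos (abs_lt.2 ⟨hβ1, by linarith⟩) _).ne'
  have hmajorant : Continuous fun θ => 2 * (1 + β + (2 / π * θ) ^ 2)⁻¹ :=
    continuous_const.mul ((by fun_prop : Continuous fun θ => 1 + β + (2 / π * θ) ^ 2).inv₀
      fun θ => by positivity)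
  calc ∫ θ in (0 : ℝ)..θ₀, (1 + β * cos (2 * θ))⁻¹
      ≤ ∫ θ in (0 : ℝ)..θ₀, 2 * (1 + β + (2 / π * θ) ^ 2)⁻¹ := by
        refine intervalIntegral.integral_mono_on hθ₀.1 (hw_inv.intervalIntegrable _ _)
          (hmajorant.intervalIntegrable _ _) fun θ hθ => ?_
        calc (1 + β * cos (2 * θ))⁻¹ ≤ ((1 + β + (2 / π * θ) ^ 2) / 2)⁻¹ :=
              inv_anti₀ (by positivity) (half_add_sq_le_one_add_mul_cos_two_mul
                ⟨by linarith, hβ0⟩ ⟨hθ.1, hθ.2.trans hθ₀.2⟩)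
          _ = 2 * (1 + β + (2 / π * θ) ^ 2)⁻¹ := by rw [inv_div, div_eq_mul_inv]
    _ = π * ∫ t in (0 : ℝ)..2 / π * θ₀, (1 + β + t ^ 2)⁻¹ := by
        rw [intervalIntegral.integral_const_mul, intervalIntegral.integral_comp_mul_left
          (fun t => (1 + β + t ^ 2)⁻¹) (by positivity), mul_zero, smul_eq_mul, inv_div]
        ring
    _ ≤ π * (π / (2 * √(1 + β))) := by gcongr; exact integral_inv_add_sq_le ha _
    _ = π ^ 2 / 2 * (√(1 + β))⁻¹ := by ring

/-- For β ∈ (-1,0) and `u` vanishing at 0 with `max |u| = 1` attained at `θ₀ ∈ (0, π/2]`: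
`1 ≤ (∫₀^{θ₀} (1+β cos 2θ)|u'|²)(∫₀^{θ₀} (1+β cos 2θ)⁻¹)`, the second factor is at most
`C(1+β)^{-1/2}` for an absolute constant `C`, and consequently
`∫₀^{θ₀} (1+β cos 2θ)|u'|² ≥ C⁻¹(1+β)^{1/2}`. -/
theorem stmt10 :
    ∃ C > 0, ∀ β ∈ Set.Ioo (-1 : ℝ) (0 : ℝ), ∀ u : ℝ → ℝ, ContDiff ℝ 1 u →
      u 0 = 0 → ∀ θ₀ ∈ Set.Ioc (0 : ℝ) (Real.pi / 2),
      |u θ₀| = 1 → (∀ θ ∈ Set.Icc (0 : ℝ) Real.pi, |u θ| ≤ 1) →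
      (1 ≤ (∫ θ in (0 : ℝ)..θ₀, (1 + β * Real.cos (2 * θ)) * deriv u θ ^ 2) *
          (∫ θ in (0 : ℝ)..θ₀, (1 + β * Real.cos (2 * θ))⁻¹)) ∧
      (∫ θ in (0 : ℝ)..θ₀, (1 + β * Real.cos (2 * θ))⁻¹) ≤ C * (1 + β) ^ (-(1 : ℝ) / 2) ∧
      C⁻¹ * (1 + β) ^ ((1 : ℝ) / 2)
        ≤ ∫ θ in (0 : ℝ)..θ₀, (1 + β * Real.cos (2 * θ)) * deriv u θ ^ 2 := by
  refine ⟨π ^ 2 / 2, by positivity, ?_⟩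
  rintro β ⟨hβ1, hβ0⟩ u hu hu0 θ₀ ⟨hθ₀0, hθ₀π⟩ huθ₀ -
  have hw_pos : ∀ θ, 0 < 1 + β * cos (2 * θ) :=
    fun θ => one_add_mul_cos_pos (abs_lt.2 ⟨hβ1, by linarith⟩) _
  have hu' : Continuous (deriv u) := hu.continuous_deriv le_rfl
  have hCS : 1 ≤ (∫ θ in (0 : ℝ)..θ₀, (1 + β * cos (2 * θ)) * deriv u θ ^ 2) *
      ∫ θ in (0 : ℝ)..θ₀, (1 + β * cos (2 * θ))⁻¹ := by
    have := sq_intervalIntegral_le_integral_mul_sq_mul_integral_inv (by fun_prop) hw_pos hu' 0 θ₀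
    rwa [intervalIntegral.integral_deriv_eq_sub
      (fun x _ => (hu.differentiable one_ne_zero).differentiableAt) (hu'.intervalIntegrable _ _),
      hu0, sub_zero, ← sq_abs, huθ₀, one_pow] at this
  have hJ := integral_inv_one_add_mul_cos_two_mul_le ⟨hβ1, hβ0.le⟩ ⟨hθ₀0.le, hθ₀π⟩
  have hI : 0 ≤ ∫ θ in (0 : ℝ)..θ₀, (1 + β * cos (2 * θ)) * deriv u θ ^ 2 :=
    intervalIntegral.integral_nonneg hθ₀0.le fun θ _ => mul_nonneg (hw_pos θ).le (sq_nonneg _)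
  rw [neg_div, rpow_neg (by linarith), ← sqrt_eq_rpow]
  refine ⟨hCS, hJ, ?_⟩
  have hsa : 0 < √(1 + β) := sqrt_pos.2 (by linarith)
  rw [inv_mul_le_iff₀ (by positivity), ← one_le_div₀ hsa]
  calc 1 ≤ _ := hCS
    _ ≤ _ := mul_le_mul_of_nonneg_left hJ hI
    _ = _ := by ring
end

section
/- Let n ≥ 3, λ > 0, α = (-(n-1) + √((n-1)² + 4λ))/2, and let L be the operator (Lv)(r) = v''(r) + (n/r)v'(r) - (λ/r²)v(r). Suppose H: (0,1) → ℝ is continuous and writes as H = A' + B where A, B ∈ C¹([0,1)) satisfy |A(r)| ≤ C₀ r^α and |B(r)| ≤ C₀ r^{α-1}. Define w(r) = ∫₀^r s^{-(n+2α)} ∫₀^s τ^{n+α} H(τ) dτ ds and v(r) = r^α w(r). Then Lv = H on (0,1) and |v(r)| ≤ C r^{1+α} for a constant C depending only on n, α, C₀. -/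
/-!
Since `α² + (n - 1) α = λ`, `r ^ α` solves `Lh = 0`, and for `v = r ^ α w` the equation `Lv = H`
becomes `(r ^ (n + 2α) w')' = r ^ (n + α) H`, which the given `w` satisfies by the fundamental
theorem of calculus. Integrating `τ ^ (n + α) A'` by parts gives
`|∫₀^s τ ^ (n + α) H| ≤ K s ^ (n + 2α)`, so `|w'| ≤ K`, `|w r| ≤ K r` and `|v r| ≤ K r ^ (1 + α)`.
-/

open intervalIntegral MeasureTheory Set Filter Topology
open scoped Interval

lemma neg_add_sqrt_div_two_pos {m c : ℝ} (hc : 0 < c) : 0 < (-m + √(m ^ 2 + 4 * c)) / 2 := by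
  have hsq := Real.sq_sqrt (show 0 ≤ m ^ 2 + 4 * c by positivity)
  nlinarith [Real.sqrt_nonneg (m ^ 2 + 4 * c)]

lemma neg_add_sqrt_div_two_sq_add_mul {m c : ℝ} (h : 0 ≤ m ^ 2 + 4 * c) :
    ((-m + √(m ^ 2 + 4 * c)) / 2) ^ 2 + m * ((-m + √(m ^ 2 + 4 * c)) / 2) = c := by
  linear_combination (1 / 4 : ℝ) * Real.sq_sqrt h

lemma ContDiffOn.intervalIntegrable_deriv {f : ℝ → ℝ} {a b : ℝ} (hab : a < b)
    (hf : ContDiffOn ℝ 1 f (Icc a b)) : IntervalIntegrable (deriv f) volume a b := by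
  rw [intervalIntegrable_iff_integrableOn_Ioo_of_le hab.le]
  have hcont := hf.continuousOn_derivWithin (uniqueDiffOn_Icc hab) le_rfl
  exact (hcont.integrableOn_Icc.mono_set Ioo_subset_Icc_self).congr_fun
    (fun x hx => derivWithin_of_mem_nhds (Icc_mem_nhds hx.1 hx.2)) measurableSet_Ioo

lemma ContinuousOn.intervalIntegrable_of_abs_le {f : ℝ → ℝ} {a b M : ℝ} (hab : a ≤ b)
    (hf : ContinuousOn f (Ioo a b)) (hM : ∀ x ∈ Ioo a b, |f x| ≤ M) :
    IntervalIntegrable f volume a b := by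
  rw [intervalIntegrable_iff_integrableOn_Ioo_of_le hab]
  exact ⟨hf.aestronglyMeasurable measurableSet_Ioo, .restrict_of_bounded (C := M)
    measure_Ioo_lt_top (ae_restrict_of_forall_mem measurableSet_Ioo hM)⟩

lemma hasDerivAt_integral_of_continuousOn_Ioo {f : ℝ → ℝ} {a b r : ℝ}
    (hf : ContinuousOn f (Ioo a b)) (hr : r ∈ Ioo a b) (hint : IntervalIntegrable f volume a r) :
    HasDerivAt (fun x => ∫ t in a..x, f t) (f r) r :=
  integral_hasDerivAt_right hint (hf.stronglyMeasurableAtFilter isOpen_Ioo r hr)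
    (hf.continuousAt (isOpen_Ioo.mem_nhds hr))

lemma integral_rpow_mul_eq_sub {A A' : ℝ → ℝ} {p s : ℝ} (hp : 0 < p) (hs : 0 ≤ s)
    (hA : ContinuousOn A (Icc 0 s)) (hA' : ∀ x ∈ Ioo 0 s, HasDerivAt A (A' x) x)
    (hA'int : IntervalIntegrable A' volume 0 s) :
    ∫ τ in 0..s, τ ^ p * A' τ = s ^ p * A s - ∫ τ in 0..s, p * τ ^ (p - 1) * A τ := by
  rw [← uIcc_of_le hs] at hA
  have hIoo : Ioo (min 0 s) (max 0 s) = Ioo 0 s := by rw [min_eq_left hs, max_eq_right hs]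
  have hibp := integral_mul_deriv_eq_deriv_mul_of_hasDerivAt (u := fun τ => τ ^ p)
    (u' := fun τ => p * τ ^ (p - 1)) (continuousOn_id.rpow_const fun _ _ => Or.inr hp.le) hA
    (fun x hx => Real.hasDerivAt_rpow_const (Or.inl (hIoo ▸ hx).1.ne'))
    (fun x hx => hA' x (hIoo ▸ hx))
    ((intervalIntegrable_rpow' (by linarith)).const_mul p) hA'int
  simpa [Real.zero_rpow hp.ne'] using hibp

lemma abs_rpow_mul_sub_le {A B : ℝ → ℝ} {α p C₀ x : ℝ} (hp : 0 < p) (hx : 0 < x)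
    (hA : |A x| ≤ C₀ * x ^ α) (hB : |B x| ≤ C₀ * x ^ (α - 1)) :
    |x ^ p * B x - p * x ^ (p - 1) * A x| ≤ (1 + p) * C₀ * x ^ (p + α - 1) := by
  have e₁ : x ^ p * x ^ (α - 1) = x ^ (p + α - 1) := by rw [← Real.rpow_add hx]; ring_nf
  have e₂ : x ^ (p - 1) * x ^ α = x ^ (p + α - 1) := by rw [← Real.rpow_add hx]; ring_nf
  have h₁ : |x ^ p * B x| ≤ C₀ * x ^ (p + α - 1) := by
    rw [abs_mul, abs_of_pos (by positivity), ← e₁, mul_left_comm]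
    exact mul_le_mul_of_nonneg_left hB (by positivity)
  have h₂ : |p * x ^ (p - 1) * A x| ≤ p * C₀ * x ^ (p + α - 1) := by
    rw [abs_mul, abs_of_pos (by positivity), ← e₂]
    calc p * x ^ (p - 1) * |A x| ≤ p * x ^ (p - 1) * (C₀ * x ^ α) :=
          mul_le_mul_of_nonneg_left hA (by positivity)
      _ = _ := by ring
  linarith [abs_sub (x ^ p * B x) (p * x ^ (p - 1) * A x)]

/-- After integrating `τ ^ p * A' τ` by parts, both remaining terms are `O(τ ^ (p + α - 1))`. -/
lemma abs_integral_rpow_mul_add_le {A A' B : ℝ → ℝ} {α p C₀ s : ℝ} (hp : 0 < p)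
    (hpα : 0 < p + α) (hs : 0 < s) (hA : ContinuousOn A (Icc 0 s))
    (hA' : ∀ x ∈ Ioo 0 s, HasDerivAt A (A' x) x) (hA'int : IntervalIntegrable A' volume 0 s)
    (hB : ContinuousOn B (Icc 0 s)) (hAbd : ∀ x ∈ Ioc 0 s, |A x| ≤ C₀ * x ^ α)
    (hBbd : ∀ x ∈ Ioc 0 s, |B x| ≤ C₀ * x ^ (α - 1)) :
    |∫ τ in 0..s, τ ^ p * (A' τ + B τ)| ≤ C₀ * (1 + (1 + p) / (p + α)) * s ^ (p + α) := by
  have hrpow : ContinuousOn (fun τ : ℝ => τ ^ p) [[0, s]] :=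
    continuousOn_id.rpow_const fun _ _ => Or.inr hp.le
  have hBint : IntervalIntegrable (fun τ => τ ^ p * B τ) volume 0 s :=
    (hrpow.mul (by rwa [uIcc_of_le hs.le])).intervalIntegrable
  have hAint : IntervalIntegrable (fun τ => p * τ ^ (p - 1) * A τ) volume 0 s :=
    ((intervalIntegrable_rpow' (by linarith)).const_mul p).mul_continuousOn
      (by rwa [uIcc_of_le hs.le])
  have hsplit : ∫ τ in 0..s, τ ^ p * (A' τ + B τ) =
      s ^ p * A s + ∫ τ in 0..s, (τ ^ p * B τ - p * τ ^ (p - 1) * A τ) := by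
    simp_rw [mul_add]
    rw [integral_add (hA'int.continuousOn_mul hrpow) hBint, integral_sub hBint hAint,
      integral_rpow_mul_eq_sub hp hs.le hA hA' hA'int]
    ring
  have hbdry : |s ^ p * A s| ≤ C₀ * s ^ (p + α) := by
    rw [abs_mul, abs_of_pos (by positivity), Real.rpow_add hs, mul_left_comm]
    exact mul_le_mul_of_nonneg_left (hAbd s ⟨hs, le_rfl⟩) (by positivity)
  have hrest : |∫ τ in 0..s, (τ ^ p * B τ - p * τ ^ (p - 1) * A τ)| ≤
      (1 + p) * C₀ * s ^ (p + α) / (p + α) := by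
    have hmajorant : ∫ τ in 0..s, (1 + p) * C₀ * τ ^ (p + α - 1) =
        (1 + p) * C₀ * s ^ (p + α) / (p + α) := by
      rw [intervalIntegral.integral_const_mul, integral_rpow (Or.inl (by linarith)), sub_add_cancel,
        Real.zero_rpow hpα.ne', sub_zero, mul_div_assoc]
    rw [← hmajorant]
    refine (Real.norm_eq_abs _).symm.trans_le (norm_integral_le_of_norm_le hs.le
      (ae_of_all _ fun x hx => abs_rpow_mul_sub_le hp hx.1 (hAbd x hx) (hBbd x hx)) ?_)
    exact (intervalIntegrable_rpow' (by linarith)).const_mul _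
  calc |∫ τ in 0..s, τ ^ p * (A' τ + B τ)|
      ≤ |s ^ p * A s| + |∫ τ in 0..s, (τ ^ p * B τ - p * τ ^ (p - 1) * A τ)| := by
        rw [hsplit]; exact abs_add_le _ _
    _ ≤ C₀ * s ^ (p + α) + (1 + p) * C₀ * s ^ (p + α) / (p + α) := add_le_add hbdry hrest
    _ = C₀ * (1 + (1 + p) / (p + α)) * s ^ (p + α) := by ring

lemma intervalIntegrable_rpow_mul_and_abs_integral_le {H A B : ℝ → ℝ} {α p C₀ b s : ℝ}
    (hp : 0 < p) (hpα : 0 < p + α) (hA : ContDiffOn ℝ 1 A (Ico 0 b))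
    (hB : ContinuousOn B (Ico 0 b)) (hAB : ∀ x ∈ Ioo 0 b, H x = deriv A x + B x)
    (hAbd : ∀ x ∈ Ioo 0 b, |A x| ≤ C₀ * x ^ α) (hBbd : ∀ x ∈ Ioo 0 b, |B x| ≤ C₀ * x ^ (α - 1))
    (hs : s ∈ Ioo 0 b) :
    IntervalIntegrable (fun τ => τ ^ p * H τ) volume 0 s ∧
      |∫ τ in 0..s, τ ^ p * H τ| ≤ C₀ * (1 + (1 + p) / (p + α)) * s ^ (p + α) := by
  have hIcc : Icc 0 s ⊆ Ico 0 b := Icc_subset_Ico_right hs.2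
  have hIoc : Ioc 0 s ⊆ Ioo 0 b := Ioc_subset_Ioo_right hs.2
  have hA' : ∀ x ∈ Ioo 0 s, HasDerivAt A (deriv A x) x := fun x hx =>
    ((hA.differentiableOn one_ne_zero x (hIcc (Ioo_subset_Icc_self hx))).differentiableAt
      (Ico_mem_nhds hx.1 (hx.2.trans hs.2))).hasDerivAt
  have hA'int := (hA.mono hIcc).intervalIntegrable_deriv hs.1
  have hH : EqOn (fun τ => τ ^ p * (deriv A τ + B τ)) (fun τ => τ ^ p * H τ) (Ι 0 s) :=
    fun x hx => by rw [uIoc_of_le hs.1.le] at hx; simp only [hAB x (hIoc hx)]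
  refine ⟨(intervalIntegrable_congr hH).mp ?_, ?_⟩
  · refine (hA'int.add ((hB.mono hIcc).intervalIntegrable_of_Icc hs.1.le)).continuousOn_mul ?_
    exact continuousOn_id.rpow_const fun _ _ => Or.inr hp.le
  · rw [← integral_congr_ae (ae_of_all _ hH)]
    exact abs_integral_rpow_mul_add_le hp hpα hs.1 (hA.continuousOn.mono hIcc) hA' hA'int
      (hB.mono hIcc) (fun x hx => hAbd x (hIoc hx)) (fun x hx => hBbd x (hIoc hx))

lemma hasDerivAt_integral_rpow_neg_mul_and_abs_le {G : ℝ → ℝ} {q K b r : ℝ}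
    (hG : ContinuousOn G (Ioo 0 b)) (hGbd : ∀ s ∈ Ioo 0 b, |G s| ≤ K * s ^ q)
    (hr : r ∈ Ioo 0 b) :
    HasDerivAt (fun x => ∫ s in 0..x, s ^ (-q) * G s) (r ^ (-q) * G r) r ∧
      |∫ s in 0..r, s ^ (-q) * G s| ≤ K * r := by
  have hbd : ∀ s ∈ Ioo 0 b, |s ^ (-q) * G s| ≤ K := fun s hs => by
    rw [abs_mul, abs_of_pos (Real.rpow_pos_of_pos hs.1 _), Real.rpow_neg hs.1.le,
      inv_mul_le_iff₀ (Real.rpow_pos_of_pos hs.1 _), mul_comm]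
    exact hGbd s hs
  have hcont : ContinuousOn (fun s => s ^ (-q) * G s) (Ioo 0 b) :=
    (continuousOn_id.rpow_const fun x hx => Or.inl hx.1.ne').mul hG
  have hsub : Ioo 0 r ⊆ Ioo 0 b := Ioo_subset_Ioo_right hr.2.le
  refine ⟨hasDerivAt_integral_of_continuousOn_Ioo hcont hr
    ((hcont.mono hsub).intervalIntegrable_of_abs_le hr.1.le fun s hs => hbd s (hsub hs)), ?_⟩
  have hint := norm_integral_le_of_norm_le_const (a := 0) (b := r) (C := K)
    (f := fun s => s ^ (-q) * G s) fun s hs => by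
      rw [uIoc_of_le hr.1.le] at hs
      exact hbd s ⟨hs.1, hs.2.trans_lt hr.2⟩
  simpa [abs_of_pos hr.1] using hint

lemma rpow_mul_reduction_of_order {n α lam r : ℝ} {G w : ℝ → ℝ} {h : ℝ}
    (hchar : α ^ 2 + (n - 1) * α = lam) (hr : 0 < r) (hG : HasDerivAt G (r ^ (n + α) * h) r)
    (hw : ∀ᶠ x in 𝓝 r, HasDerivAt w (x ^ (-(n + 2 * α)) * G x) x) :
    deriv (deriv fun x => x ^ α * w x) r + n / r * deriv (fun x => x ^ α * w x) r
      - lam / r ^ 2 * (r ^ α * w r) = h := by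
  set q := -(n + 2 * α)
  have hv : ∀ᶠ x in 𝓝 r,
      HasDerivAt (fun x => x ^ α * w x) (α * x ^ (α - 1) * w x + x ^ α * (x ^ q * G x)) x := by
    filter_upwards [hw, lt_mem_nhds hr] with x hwx hx
    exact (Real.hasDerivAt_rpow_const (Or.inl hx.ne')).mul hwx
  have hv' : HasDerivAt (fun x => α * x ^ (α - 1) * w x + x ^ α * (x ^ q * G x))
      (α * ((α - 1) * r ^ (α - 1 - 1)) * w r + α * r ^ (α - 1) * (r ^ q * G r)
        + (α * r ^ (α - 1) * (r ^ q * G r)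
          + r ^ α * (q * r ^ (q - 1) * G r + r ^ q * (r ^ (n + α) * h)))) r := by
    have hpow : ∀ p : ℝ, HasDerivAt (fun x : ℝ => x ^ p) (p * r ^ (p - 1)) r := fun p =>
      Real.hasDerivAt_rpow_const (Or.inl hr.ne')
    exact (((hpow (α - 1)).const_mul α).mul hw.self_of_nhds).add
      ((hpow α).mul ((hpow q).mul hG))
  have hvv : deriv (fun x => x ^ α * w x) =ᶠ[𝓝 r]
      fun x => α * x ^ (α - 1) * w x + x ^ α * (x ^ q * G x) := hv.mono fun x hx => hx.deriv
  rw [hvv.deriv_eq, hv'.deriv, hv.self_of_nhds.deriv]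
  have e₁ : r ^ (α - 1) = r ^ α / r := by rw [Real.rpow_sub_one hr.ne']
  have e₂ : r ^ (α - 1 - 1) = r ^ α / r / r := by rw [Real.rpow_sub_one hr.ne', e₁]
  have e₃ : r ^ (q - 1) = r ^ q / r := Real.rpow_sub_one hr.ne' q
  have e₄ : r ^ q * r ^ (n + α) * r ^ α = 1 := by
    rw [← Real.rpow_add hr, ← Real.rpow_add hr, show q + (n + α) + α = 0 by ring,
      Real.rpow_zero]
  rw [e₁, e₂, e₃]
  field_simp
  linear_combination (r ^ α * w r) * hchar + r ^ 2 * h * e₄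

theorem stmt15_general (n : ℕ) (lam : ℝ) (hlam : 0 < lam) (C₀ : ℝ) (hC₀ : 0 < C₀)
    (α : ℝ) (hα : α = (-(n - 1 : ℝ) + Real.sqrt ((n - 1 : ℝ) ^ 2 + 4 * lam)) / 2)
    (H A B : ℝ → ℝ) (hH : ContinuousOn H (Set.Ioo 0 1))
    (hA : ContDiffOn ℝ 1 A (Set.Ico 0 1)) (hB : ContDiffOn ℝ 1 B (Set.Ico 0 1))
    (hAB : ∀ r ∈ Set.Ioo (0 : ℝ) 1, H r = deriv A r + B r)
    (hAbd : ∀ r ∈ Set.Ioo (0 : ℝ) 1, |A r| ≤ C₀ * r ^ α)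
    (hBbd : ∀ r ∈ Set.Ioo (0 : ℝ) 1, |B r| ≤ C₀ * r ^ (α - 1)) :
    let w : ℝ → ℝ := fun r =>
      ∫ s in (0 : ℝ)..r, s ^ (-((n : ℝ) + 2 * α)) * ∫ τ in (0 : ℝ)..s, τ ^ ((n : ℝ) + α) * H τ
    let v : ℝ → ℝ := fun r => r ^ α * w r
    (∀ r ∈ Set.Ioo (0 : ℝ) 1,
      deriv (deriv v) r + ((n : ℝ) / r) * deriv v r - (lam / r ^ 2) * v r = H r) ∧
    ∃ C > 0, ∀ r ∈ Set.Ioo (0 : ℝ) 1, |v r| ≤ C * r ^ (1 + α) := by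
  intro w v
  have hα₀ : 0 < α := by rw [hα]; exact neg_add_sqrt_div_two_pos hlam
  have hchar : α ^ 2 + ((n : ℝ) - 1) * α = lam := by
    rw [hα]; exact neg_add_sqrt_div_two_sq_add_mul (by positivity)
  have hG := fun s (hs : s ∈ Ioo (0 : ℝ) 1) => intervalIntegrable_rpow_mul_and_abs_integral_le
    (p := n + α) (by positivity) (by positivity) hA hB.continuousOn hAB hAbd hBbd hs
  have hG' : ∀ r ∈ Ioo (0 : ℝ) 1, HasDerivAt (fun s => ∫ τ in 0..s, τ ^ ((n : ℝ) + α) * H τ)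
      (r ^ ((n : ℝ) + α) * H r) r := fun r hr => hasDerivAt_integral_of_continuousOn_Ioo
    ((continuousOn_id.rpow_const fun _ _ => Or.inr (by positivity)).mul hH) hr (hG r hr).1
  have hw := fun r (hr : r ∈ Ioo (0 : ℝ) 1) => hasDerivAt_integral_rpow_neg_mul_and_abs_le
    (q := n + 2 * α) (fun x hx => (hG' x hx).continuousAt.continuousWithinAt)
    (fun s hs => by convert (hG s hs).2 using 3; ring) hr
  refine ⟨fun r hr => rpow_mul_reduction_of_order hchar hr.1 (hG' r hr) ?_,
    C₀ * (1 + (1 + (n + α)) / (n + α + α)), by positivity, fun r hr => ?_⟩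
  · filter_upwards [isOpen_Ioo.mem_nhds hr] with x hx using (hw x hx).1
  · calc |v r| = r ^ α * |w r| := by rw [abs_mul, abs_of_pos (Real.rpow_pos_of_pos hr.1 _)]
      _ ≤ r ^ α * (_ * r) := mul_le_mul_of_nonneg_left (hw r hr).2 (Real.rpow_nonneg hr.1.le _)
      _ = _ * r ^ (1 + α) := by rw [Real.rpow_add hr.1, Real.rpow_one]; ring

/-- Reduction of order: with `α = (-(n-1)+√((n-1)²+4λ))/2`, if `H = A' + B` on `(0,1)` with
`|A(r)| ≤ C₀ r^α` and `|B(r)| ≤ C₀ r^{α-1}`, then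
`v(r) = r^α ∫₀^r s^{-(n+2α)} ∫₀^s τ^{n+α} H(τ) dτ ds` satisfies
`v'' + (n/r)v' - (λ/r²)v = H` on `(0,1)` and `|v(r)| ≤ C r^{1+α}` with `C = C(n,α,C₀)`. -/
theorem stmt15 (n : ℕ) (hn : 3 ≤ n) (lam : ℝ) (hlam : 0 < lam) (C₀ : ℝ) (hC₀ : 0 < C₀)
    (α : ℝ) (hα : α = (-(n - 1 : ℝ) + Real.sqrt ((n - 1 : ℝ) ^ 2 + 4 * lam)) / 2)
    (H A B : ℝ → ℝ) (hH : ContinuousOn H (Set.Ioo 0 1))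
    (hA : ContDiffOn ℝ 1 A (Set.Ico 0 1)) (hB : ContDiffOn ℝ 1 B (Set.Ico 0 1))
    (hAB : ∀ r ∈ Set.Ioo (0 : ℝ) 1, H r = deriv A r + B r)
    (hAbd : ∀ r ∈ Set.Ioo (0 : ℝ) 1, |A r| ≤ C₀ * r ^ α)
    (hBbd : ∀ r ∈ Set.Ioo (0 : ℝ) 1, |B r| ≤ C₀ * r ^ (α - 1)) :
    let w : ℝ → ℝ := fun r =>
      ∫ s in (0 : ℝ)..r, s ^ (-((n : ℝ) + 2 * α)) * ∫ τ in (0 : ℝ)..s, τ ^ ((n : ℝ) + α) * H τ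
    let v : ℝ → ℝ := fun r => r ^ α * w r
    (∀ r ∈ Set.Ioo (0 : ℝ) 1,
      deriv (deriv v) r + ((n : ℝ) / r) * deriv v r - (lam / r ^ 2) * v r = H r) ∧
    ∃ C > 0, ∀ r ∈ Set.Ioo (0 : ℝ) 1, |v r| ≤ C * r ^ (1 + α) :=
  stmt15_general n lam hlam C₀ hC₀ α hα H A B hH hA hB hAB hAbd hBbd
end
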